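/- arXiv:math/0602102 — 6 statements merged into one kernel-verified Lean document; each statement's English description precedes it below -/
import Mathlib

section
/- In a finite groupoid G with subgroupoids H and K such that G = HK and H ∩ K ⊆ G⁰ (the units), every element g of G has a unique decomposition g = hk with h ∈ H, k ∈ K and s(h) = r(k). -/
/-- A (small) groupoid structure on a carrier type `G` of "arrows", with
source map `s`, range map `r`, partial multiplication `mul` (defined when
`s x = r y`) and inversion `inv`.  Units are identified with the elements
`s x`, `r x`. -/
structure Gpd (G : Type*) where
  s : G → G
  r : G → G
  mul : ∀ x y : G, s x = r y → G
  inv : G → G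
  s_mul : ∀ x y h, s (mul x y h) = s y
  r_mul : ∀ x y h, r (mul x y h) = r x
  s_inv : ∀ x, s (inv x) = r x
  r_inv : ∀ x, r (inv x) = s x
  s_s : ∀ x, s (s x) = s x
  r_s : ∀ x, r (s x) = s x
  s_r : ∀ x, s (r x) = r x
  r_r : ∀ x, r (r x) = r x
  mul_source : ∀ x (h : s x = r (s x)), mul x (s x) h = x
  range_mul : ∀ x (h : s (r x) = r x), mul (r x) x h = x
  mul_inv : ∀ x (h : s x = r (inv x)), mul x (inv x) h = r x
  inv_mul : ∀ x (h : s (inv x) = r x), mul (inv x) x h = s x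
  mul_assoc : ∀ x y z (hxy : s x = r y) (hyz : s y = r z)
      (h1 : s (mul x y hxy) = r z) (h2 : s x = r (mul y z hyz)),
      mul (mul x y hxy) z h1 = mul x (mul y z hyz) h2

namespace Gpd

variable {G : Type*} (𝒢 : Gpd G)

/-- The set of units `G⁰` of the groupoid. -/
def units : Set G := {u | 𝒢.r u = u}

/-- A wide subgroupoid: a subset closed under multiplication and inversion and
containing all units. -/
structure IsSubgpd (H : Set G) : Prop where
  mul_mem : ∀ x y (h : 𝒢.s x = 𝒢.r y), x ∈ H → y ∈ H → 𝒢.mul x y h ∈ H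
  inv_mem : ∀ x, x ∈ H → 𝒢.inv x ∈ H
  unit_mem : ∀ u, u ∈ 𝒢.units → u ∈ H

/-- A match pair of subgroupoids `H`, `K` of `G`, together with the projection
maps `p₁ : G → H`, `p₂ : G → K` of the unique factorization `g = p₁ g * p₂ g`. -/
structure MatchPair (H K : Set G) (p₁ p₂ : G → G) : Prop where
  subH : 𝒢.IsSubgpd H
  subK : 𝒢.IsSubgpd K
  inter : H ∩ K ⊆ 𝒢.units
  p₁_mem : ∀ g, p₁ g ∈ H
  p₂_mem : ∀ g, p₂ g ∈ K
  comp : ∀ g, 𝒢.s (p₁ g) = 𝒢.r (p₂ g)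
  decomp : ∀ g, g = 𝒢.mul (p₁ g) (p₂ g) (comp g)
  uniq : ∀ h, h ∈ H → ∀ k, k ∈ K → ∀ hc : 𝒢.s h = 𝒢.r k,
      p₁ (𝒢.mul h k hc) = h ∧ p₂ (𝒢.mul h k hc) = k

theorem MatchPair.s_p₂ {H K : Set G} {p₁ p₂ : G → G}
    (mp : 𝒢.MatchPair H K p₁ p₂) (g : G) : 𝒢.s (p₂ g) = 𝒢.s g := by
  conv_rhs => rw [mp.decomp g]
  rw [𝒢.s_mul]

theorem MatchPair.r_p₁ {H K : Set G} {p₁ p₂ : G → G}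
    (mp : 𝒢.MatchPair H K p₁ p₂) (g : G) : 𝒢.r (p₁ g) = 𝒢.r g := by
  conv_rhs => rw [mp.decomp g]
  rw [𝒢.r_mul]

/-- the left "action" `k ▷ h = p₁ (kh)` -/
def rAct (p₁ : G → G) (k h : G) (hc : 𝒢.s k = 𝒢.r h) : G := p₁ (𝒢.mul k h hc)

/-- the right "action" `k ◁ h = p₂ (kh)` -/
def lAct (p₂ : G → G) (k h : G) (hc : 𝒢.s k = 𝒢.r h) : G := p₂ (𝒢.mul k h hc)

end Gpd

namespace Gpd

variable {G : Type*} (𝒢 : Gpd G)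

theorem s_eq_self_of_mem_units {u : G} (hu : u ∈ 𝒢.units) : 𝒢.s u = u := by
  conv_lhs => rw [← hu]
  rw [𝒢.s_r, hu]

theorem mul_eq_left_of_mem_units {x u : G} (hu : u ∈ 𝒢.units) (hc : 𝒢.s x = 𝒢.r u) :
    𝒢.mul x u hc = x := by
  obtain rfl : u = 𝒢.s x := (hc.trans hu).symm
  exact 𝒢.mul_source x hc

theorem mul_eq_right_of_mem_units {u x : G} (hu : u ∈ 𝒢.units) (hc : 𝒢.s u = 𝒢.r x) :
    𝒢.mul u x hc = x := by
  obtain rfl : u = 𝒢.r x := (𝒢.s_eq_self_of_mem_units hu).symm.trans hc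
  exact 𝒢.range_mul x hc

theorem inv_mul_cancel_left (x y : G) (hc : 𝒢.s x = 𝒢.r y) :
    𝒢.mul (𝒢.inv x) (𝒢.mul x y hc) (by rw [s_inv, r_mul]) = y := by
  rw [← 𝒢.mul_assoc _ _ _ (𝒢.s_inv x) hc (by rw [s_mul]; exact hc)]
  simp only [inv_mul]
  exact 𝒢.mul_eq_right_of_mem_units (𝒢.r_s x) _

theorem mul_inv_cancel_right (x y : G) (hc : 𝒢.s x = 𝒢.r y) :
    𝒢.mul (𝒢.mul x y hc) (𝒢.inv y) (by rw [s_mul, r_inv]) = x := by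
  rw [𝒢.mul_assoc _ _ _ hc (by rw [r_inv]) (by rw [s_mul, r_inv]) (by rw [r_mul]; exact hc)]
  simp only [mul_inv]
  exact 𝒢.mul_eq_left_of_mem_units (𝒢.r_r y) _

theorem mul_inv_cancel_left (x y : G) (hc : 𝒢.s (𝒢.inv x) = 𝒢.r y) :
    𝒢.mul x (𝒢.mul (𝒢.inv x) y hc) (by rw [r_mul, r_inv]) = y := by
  rw [← 𝒢.mul_assoc _ _ _ (by rw [r_inv]) hc (by rw [s_mul]; exact hc)]
  simp only [mul_inv]
  exact 𝒢.mul_eq_right_of_mem_units (𝒢.r_r x) _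

/-- If `hk = h'k'`, then `h⁻¹h' = kk'⁻¹` lies in `H ∩ K`, hence is a unit. -/
theorem eq_and_eq_of_mul_eq_mul {H K : Set G} (hH : 𝒢.IsSubgpd H) (hK : 𝒢.IsSubgpd K)
    (hint : H ∩ K ⊆ 𝒢.units) {h h' k k' : G} (hh : h ∈ H) (hh' : h' ∈ H) (hk : k ∈ K)
    (hk' : k' ∈ K) (hc : 𝒢.s h = 𝒢.r k) (hc' : 𝒢.s h' = 𝒢.r k')
    (heq : 𝒢.mul h k hc = 𝒢.mul h' k' hc') : h = h' ∧ k = k' := by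
  have hr : 𝒢.s (𝒢.inv h) = 𝒢.r h' := by simpa only [s_inv, r_mul] using congrArg 𝒢.r heq
  obtain ⟨x, hx⟩ : ∃ x, 𝒢.mul (𝒢.inv h) h' hr = x := ⟨_, rfl⟩
  have hxk' : 𝒢.s x = 𝒢.r k' := by rw [← hx, s_mul, hc']
  have hk_eq : k = 𝒢.mul x k' hxk' :=
    calc k = 𝒢.mul (𝒢.inv h) (𝒢.mul h k hc) _ := (𝒢.inv_mul_cancel_left h k hc).symm
      _ = 𝒢.mul (𝒢.inv h) (𝒢.mul h' k' hc') (by rw [r_mul]; exact hr) := by congr 1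
      _ = 𝒢.mul x k' hxk' := by subst hx; exact (𝒢.mul_assoc _ _ _ hr hc' _ _).symm
  subst hk_eq
  have hxH : x ∈ H := hx ▸ hH.mul_mem _ _ hr (hH.inv_mem h hh) hh'
  have hxK : x ∈ K := by
    rw [← 𝒢.mul_inv_cancel_right x k' hxk']
    exact hK.mul_mem _ _ _ hk (hK.inv_mem k' hk')
  have hu := hint ⟨hxH, hxK⟩
  constructor
  · calc h = 𝒢.mul h x (by rw [← hx, r_mul, r_inv]) := (𝒢.mul_eq_left_of_mem_units hu _).symm
      _ = h' := by subst hx; exact 𝒢.mul_inv_cancel_left h h' hr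
  · exact 𝒢.mul_eq_right_of_mem_units hu hxk'

end Gpd

theorem stmt0_general {G : Type*} (𝒢 : Gpd G) (H K : Set G)
    (hH : 𝒢.IsSubgpd H) (hK : 𝒢.IsSubgpd K)
    (hHK : ∀ g : G, ∃ h ∈ H, ∃ k ∈ K, ∃ hc : 𝒢.s h = 𝒢.r k, g = 𝒢.mul h k hc)
    (hint : H ∩ K ⊆ 𝒢.units) (g : G) :
    ∃ h ∈ H, ∃ k ∈ K, ∃ hc : 𝒢.s h = 𝒢.r k, g = 𝒢.mul h k hc ∧
      ∀ h' ∈ H, ∀ k' ∈ K, ∀ hc' : 𝒢.s h' = 𝒢.r k',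
        g = 𝒢.mul h' k' hc' → h' = h ∧ k' = k := by
  obtain ⟨h, hh, k, hk, hc, rfl⟩ := hHK g
  refine ⟨h, hh, k, hk, hc, rfl, fun h' hh' k' hk' hc' heq => ?_⟩
  exact 𝒢.eq_and_eq_of_mul_eq_mul hH hK hint hh' hh hk' hk hc' hc heq.symm

/-- In a finite groupoid `G` with subgroupoids `H`, `K` such that
`G = HK` and `H ∩ K ⊆ G⁰`, every `g ∈ G` has a unique decomposition `g = hk`
with `h ∈ H`, `k ∈ K`, `s h = r k`. -/
theorem stmt0 {G : Type*} [Finite G] (𝒢 : Gpd G) (H K : Set G)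
    (hH : 𝒢.IsSubgpd H) (hK : 𝒢.IsSubgpd K)
    (hHK : ∀ g : G, ∃ h ∈ H, ∃ k ∈ K, ∃ hc : 𝒢.s h = 𝒢.r k, g = 𝒢.mul h k hc)
    (hint : H ∩ K ⊆ 𝒢.units) (g : G) :
    ∃ h ∈ H, ∃ k ∈ K, ∃ hc : 𝒢.s h = 𝒢.r k, g = 𝒢.mul h k hc ∧
      ∀ h' ∈ H, ∀ k' ∈ K, ∀ hc' : 𝒢.s h' = 𝒢.r k',
        g = 𝒢.mul h' k' hc' → h' = h ∧ k' = k :=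
  stmt0_general 𝒢 H K hH hK hHK hint g
end

section
/- Let (H,K) be a match pair of finite groupoids. Define on T = {(k,h) ∈ K × H : s(k) = r(h)} the horizontal partial product (k,h) →□ (k',h') = (kk', h') when h' = k ▷ h (and s(k') = r(h')). On the algebra ℂT with vertical convolution, the map Γ(χ_{(k,h)}) = Σ_{(k₁,h₁) →□ (k₂,h₂) = (k,h)} χ_{(k₁,h₁)} ⊗ χ_{(k₂,h₂)} is coassociative: (Γ ⊗ id) ∘ Γ = (id ⊗ Γ) ∘ Γ. -/
namespace Gpd

noncomputable section
attribute [local instance] Classical.propDecidable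

variable {G : Type*} (𝒢 : Gpd G)

/-- The set `T = {(k,h) ∈ K × H : s k = r h}` indexing the basis of `ℂT`. -/
def Tset (H K : Set G) : Set (G × G) :=
  {p | p.1 ∈ K ∧ p.2 ∈ H ∧ 𝒢.s p.1 = 𝒢.r p.2}

variable [Fintype G] {H K : Set G}

/-- The vertical convolution product on `ℂT`:
`χ_{(k,h)} ⋆ χ_{(k',h')} = χ_{(k,hh')}` if `k' = k ◁ h` (and `h, h'`
composable), and `0` otherwise, extended bilinearly. -/
def conv (p₂ : G → G) (F F' : ↥(𝒢.Tset H K) → ℂ) : ↥(𝒢.Tset H K) → ℂ :=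
  fun t => ∑ t₁ : ↥(𝒢.Tset H K), ∑ t₂ : ↥(𝒢.Tset H K),
    if hd : 𝒢.s t₁.1.2 = 𝒢.r t₂.1.2 then
      (if t₂.1.1 = 𝒢.lAct p₂ t₁.1.1 t₁.1.2 t₁.prop.2.2 ∧
          t.1 = (t₁.1.1, 𝒢.mul t₁.1.2 t₂.1.2 hd) then F t₁ * F' t₂ else 0)
    else 0

end

end Gpd

namespace Gpd

variable {G : Type*} {𝒢 : Gpd G} {H K : Set G} {p₁ p₂ : G → G}

namespace MatchPair

variable (mp : 𝒢.MatchPair H K p₁ p₂)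
include mp

theorem p₁_mul_of_mem_right {g k : G} (hk : k ∈ K) (hc : 𝒢.s g = 𝒢.r k) :
    p₁ (𝒢.mul g k hc) = p₁ g := by
  have h₂ : 𝒢.s (p₂ g) = 𝒢.r k := (MatchPair.s_p₂ 𝒢 mp g).trans hc
  have h₁ : 𝒢.s (p₁ g) = 𝒢.r (𝒢.mul (p₂ g) k h₂) := by rw [𝒢.r_mul]; exact mp.comp g
  have factor : 𝒢.mul g k hc = 𝒢.mul (p₁ g) (𝒢.mul (p₂ g) k h₂) h₁ := by
    calc 𝒢.mul g k hc = 𝒢.mul (𝒢.mul (p₁ g) (p₂ g) (mp.comp g)) k (by rwa [𝒢.s_mul]) := by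
          congr 1; exact mp.decomp g
      _ = _ := 𝒢.mul_assoc _ _ _ _ _ _ _
  rw [factor]
  exact (mp.uniq _ (mp.p₁_mem g) _ (mp.subK.mul_mem _ _ h₂ (mp.p₂_mem g) hk) h₁).1

theorem p₁_mul_p₁ {k g : G} (hc : 𝒢.s k = 𝒢.r (p₁ g)) (hc' : 𝒢.s k = 𝒢.r g) :
    p₁ (𝒢.mul k (p₁ g) hc) = p₁ (𝒢.mul k g hc') := by
  have h₂ : 𝒢.s (𝒢.mul k (p₁ g) hc) = 𝒢.r (p₂ g) := by rw [𝒢.s_mul]; exact mp.comp g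
  have factor : 𝒢.mul k g hc' = 𝒢.mul (𝒢.mul k (p₁ g) hc) (p₂ g) h₂ := by
    calc 𝒢.mul k g hc' = 𝒢.mul k (𝒢.mul (p₁ g) (p₂ g) (mp.comp g)) (by rwa [𝒢.r_mul]) := by
          congr 1; exact mp.decomp g
      _ = _ := (𝒢.mul_assoc _ _ _ _ _ _ _).symm
  rw [factor, mp.p₁_mul_of_mem_right (mp.p₂_mem g)]

theorem mul_rAct {k₁ k₂ h : G} (h₁₂ : 𝒢.s k₁ = 𝒢.r k₂) (h₂ : 𝒢.s k₂ = 𝒢.r h)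
    (h₁₂' : 𝒢.s (𝒢.mul k₁ k₂ h₁₂) = 𝒢.r h) (h₁ : 𝒢.s k₁ = 𝒢.r (𝒢.rAct p₁ k₂ h h₂)) :
    𝒢.rAct p₁ (𝒢.mul k₁ k₂ h₁₂) h h₁₂' = 𝒢.rAct p₁ k₁ (𝒢.rAct p₁ k₂ h h₂) h₁ := by
  have hc : 𝒢.s k₁ = 𝒢.r (𝒢.mul k₂ h h₂) := by rwa [𝒢.r_mul]
  exact (congrArg p₁ (𝒢.mul_assoc _ _ _ _ _ _ hc)).trans (mp.p₁_mul_p₁ h₁ hc).symm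

end MatchPair

end Gpd

namespace Gpd

noncomputable section
attribute [local instance] Classical.propDecidable

variable {G : Type*} (𝒢 : Gpd G) {H K : Set G} {p₁ p₂ : G → G}

/-- The horizontal product `(k₁,h₁) →□ (k₂,h₂) = (k₁k₂, h₂)`, defined when
`k₁, k₂` are composable (and `h₁ = k₂ ▷ h₂`). -/
def hcomp (mp : 𝒢.MatchPair H K p₁ p₂) (t₁ t₂ : ↥(𝒢.Tset H K))
    (hc : 𝒢.s t₁.1.1 = 𝒢.r t₂.1.1) : ↥(𝒢.Tset H K) :=
  ⟨(𝒢.mul t₁.1.1 t₂.1.1 hc, t₂.1.2),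
    ⟨mp.subK.mul_mem _ _ hc t₁.prop.1 t₂.prop.1, t₂.prop.2.1, by
      rw [𝒢.s_mul]; exact t₂.prop.2.2⟩⟩

@[simp]
theorem hcomp_fst (mp : 𝒢.MatchPair H K p₁ p₂) (t₁ t₂ : ↥(𝒢.Tset H K))
    (hc : 𝒢.s t₁.1.1 = 𝒢.r t₂.1.1) : (𝒢.hcomp mp t₁ t₂ hc).1.1 = 𝒢.mul t₁.1.1 t₂.1.1 hc :=
  rfl

@[simp]
theorem hcomp_snd (mp : 𝒢.MatchPair H K p₁ p₂) (t₁ t₂ : ↥(𝒢.Tset H K))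
    (hc : 𝒢.s t₁.1.1 = 𝒢.r t₂.1.1) : (𝒢.hcomp mp t₁ t₂ hc).1.2 = t₂.1.2 :=
  rfl

theorem hcomp_assoc (mp : 𝒢.MatchPair H K p₁ p₂) (a b c : ↥(𝒢.Tset H K))
    (hab : 𝒢.s a.1.1 = 𝒢.r b.1.1) (hbc : 𝒢.s b.1.1 = 𝒢.r c.1.1)
    (hab_c : 𝒢.s (𝒢.hcomp mp a b hab).1.1 = 𝒢.r c.1.1)
    (ha_bc : 𝒢.s a.1.1 = 𝒢.r (𝒢.hcomp mp b c hbc).1.1) :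
    𝒢.hcomp mp (𝒢.hcomp mp a b hab) c hab_c = 𝒢.hcomp mp a (𝒢.hcomp mp b c hbc) ha_bc :=
  Subtype.ext (Prod.ext (𝒢.mul_assoc _ _ _ _ _ _ _) rfl)

variable [Fintype G]

/-- The coproduct `Γ(χ_{(k,h)}) = Σ_{(k₁,h₁) →□ (k₂,h₂) = (k,h)}
`χ_{(k₁,h₁)} ⊗ χ_{(k₂,h₂)}`, as a map `(T → ℂ) → (T × T → ℂ)`. -/
def Gam (mp : 𝒢.MatchPair H K p₁ p₂) (F : ↥(𝒢.Tset H K) → ℂ) :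
    ↥(𝒢.Tset H K) × ↥(𝒢.Tset H K) → ℂ := fun q =>
  if hc : 𝒢.s q.1.1.1 = 𝒢.r q.2.1.1 then
    (if q.1.1.2 = 𝒢.rAct p₁ q.2.1.1 q.2.1.2 q.2.prop.2.2 then
      F (𝒢.hcomp mp q.1 q.2 hc) else 0)
  else 0

/-- `Γ ⊗ id` on the (function model of the) tensor square. -/
def GamL (mp : 𝒢.MatchPair H K p₁ p₂) (Ξ : ↥(𝒢.Tset H K) × ↥(𝒢.Tset H K) → ℂ) :
    ↥(𝒢.Tset H K) × ↥(𝒢.Tset H K) × ↥(𝒢.Tset H K) → ℂ := fun q =>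
  if hc : 𝒢.s q.1.1.1 = 𝒢.r q.2.1.1.1 then
    (if q.1.1.2 = 𝒢.rAct p₁ q.2.1.1.1 q.2.1.1.2 q.2.1.prop.2.2 then
      Ξ (𝒢.hcomp mp q.1 q.2.1 hc, q.2.2) else 0)
  else 0

/-- `id ⊗ Γ` on the (function model of the) tensor square. -/
def GamR (mp : 𝒢.MatchPair H K p₁ p₂) (Ξ : ↥(𝒢.Tset H K) × ↥(𝒢.Tset H K) → ℂ) :
    ↥(𝒢.Tset H K) × ↥(𝒢.Tset H K) × ↥(𝒢.Tset H K) → ℂ := fun q =>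
  if hc : 𝒢.s q.2.1.1.1 = 𝒢.r q.2.2.1.1 then
    (if q.2.1.1.2 = 𝒢.rAct p₁ q.2.2.1.1 q.2.2.1.2 q.2.2.prop.2.2 then
      Ξ (q.1, 𝒢.hcomp mp q.2.1 q.2.2 hc) else 0)
  else 0

/-- the coproduct `Γ` determined by the horizontal product of
the double groupoid `T` is coassociative: `(Γ ⊗ id) ∘ Γ = (id ⊗ Γ) ∘ Γ`. -/
theorem stmt10 (mp : 𝒢.MatchPair H K p₁ p₂) :
    ∀ F : ↥(𝒢.Tset H K) → ℂ, 𝒢.GamL mp (𝒢.Gam mp F) = 𝒢.GamR mp (𝒢.Gam mp F) := by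
  intro F
  funext ⟨⟨⟨ka, ha⟩, hA⟩, ⟨⟨kb, hb⟩, hB⟩, ⟨⟨kc, hc⟩, hC⟩⟩
  by_cases hab : 𝒢.s ka = 𝒢.r kb
  swap
  · simp [GamL, GamR, Gam, hab, 𝒢.r_mul]
  by_cases hbc : 𝒢.s kb = 𝒢.r kc
  swap
  · simp [GamL, GamR, Gam, hbc, 𝒢.s_mul]
  by_cases hbh : hb = 𝒢.rAct p₁ kc hc hC.2.2
  swap
  · simp [GamL, GamR, Gam, hbh]
  subst hbh
  have hact := mp.mul_rAct hbc hC.2.2 (by rw [𝒢.s_mul]; exact hC.2.2) hB.2.2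
  simp [GamL, GamR, Gam, hab, hbc, 𝒢.s_mul, 𝒢.r_mul, hact, hcomp_assoc]

end

end Gpd
end

section
/- Let (H,K) be a match pair of finite groupoids and define κ on ℂT by κ(χ_{(k,h)}) = χ_{((k◁h)⁻¹, (k▷h)⁻¹)}. Then κ is an anti-automorphism of the vertical convolution algebra ℂT and κ² = id. -/
namespace Gpd

noncomputable section
attribute [local instance] Classical.propDecidable

variable {G : Type*} (𝒢 : Gpd G)

variable [Fintype G] {H K : Set G}

end

end Gpd

namespace Gpd

noncomputable section
attribute [local instance] Classical.propDecidable

variable {G : Type*} (𝒢 : Gpd G) {H K : Set G} {p₁ p₂ : G → G}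

/-- The map `(k,h) ↦ ((k◁h)⁻¹, (k▷h)⁻¹)` of `T` underlying the antipode `κ`. -/
def kappaT (mp : 𝒢.MatchPair H K p₁ p₂) (t : ↥(𝒢.Tset H K)) : ↥(𝒢.Tset H K) :=
  ⟨(𝒢.inv (𝒢.lAct p₂ t.1.1 t.1.2 t.prop.2.2),
    𝒢.inv (𝒢.rAct p₁ t.1.1 t.1.2 t.prop.2.2)),
    ⟨mp.subK.inv_mem _ (mp.p₂_mem _), mp.subH.inv_mem _ (mp.p₁_mem _), by
      rw [𝒢.s_inv, 𝒢.r_inv]; exact (mp.comp _).symm⟩⟩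

attribute [local simp] s_mul r_mul s_inv r_inv s_s r_s s_r r_r

theorem eq_inv_of_mul_eq_r {x z : G} (hc : 𝒢.s x = 𝒢.r z) (hm : 𝒢.mul x z hc = 𝒢.r x) :
    z = 𝒢.inv x :=
  calc z = 𝒢.mul (𝒢.r z) z (by simp) := (𝒢.range_mul z _).symm
    _ = 𝒢.mul (𝒢.mul (𝒢.inv x) x (by simp)) z (by simp [hc]) := by
        congr 1; rw [𝒢.inv_mul, hc]
    _ = 𝒢.mul (𝒢.inv x) (𝒢.mul x z hc) (by simp) := 𝒢.mul_assoc _ _ _ _ _ _ _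
    _ = 𝒢.mul (𝒢.inv x) (𝒢.s (𝒢.inv x)) (by simp) := by congr 1; simp [hm]
    _ = 𝒢.inv x := 𝒢.mul_source _ _

theorem inv_inv (x : G) : 𝒢.inv (𝒢.inv x) = x :=
  (𝒢.eq_inv_of_mul_eq_r (by simp) (by rw [𝒢.inv_mul]; simp)).symm

theorem mul_inv_rev {x y : G} (hxy : 𝒢.s x = 𝒢.r y) (h : 𝒢.s (𝒢.inv y) = 𝒢.r (𝒢.inv x)) :
    𝒢.inv (𝒢.mul x y hxy) = 𝒢.mul (𝒢.inv y) (𝒢.inv x) h := by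
  refine (𝒢.eq_inv_of_mul_eq_r (by simp) ?_).symm
  calc 𝒢.mul (𝒢.mul x y hxy) (𝒢.mul (𝒢.inv y) (𝒢.inv x) h) _
      = 𝒢.mul x (𝒢.mul y (𝒢.mul (𝒢.inv y) (𝒢.inv x) h) (by simp)) (by simp [hxy]) :=
        𝒢.mul_assoc _ _ _ _ _ _ _
    _ = 𝒢.mul x (𝒢.mul (𝒢.mul y (𝒢.inv y) (by simp)) (𝒢.inv x) (by simp [hxy]))
          (by simp [hxy]) := by
        congr 1; exact (𝒢.mul_assoc _ _ _ _ _ _ _).symm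
    _ = 𝒢.mul x (𝒢.mul (𝒢.r (𝒢.inv x)) (𝒢.inv x) (by simp)) (by simp) := by
        congr 2; rw [𝒢.mul_inv]; simp [hxy]
    _ = 𝒢.r (𝒢.mul x y hxy) := by simp only [𝒢.range_mul, 𝒢.mul_inv, 𝒢.r_mul]

namespace MatchPair

variable {𝒢}

theorem p_inv_mul (mp : 𝒢.MatchPair H K p₁ p₂) {k h : G} (hk : k ∈ K) (hh : h ∈ H)
    (hc : 𝒢.s k = 𝒢.r h) :
    p₁ (𝒢.inv (𝒢.mul k h hc)) = 𝒢.inv h ∧ p₂ (𝒢.inv (𝒢.mul k h hc)) = 𝒢.inv k := by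
  rw [𝒢.mul_inv_rev hc (by simp [hc])]
  exact mp.uniq _ (mp.subH.inv_mem h hh) _ (mp.subK.inv_mem k hk) _

theorem inv_p₂_mul_inv_p₁ (mp : 𝒢.MatchPair H K p₁ p₂) (g : G)
    (h : 𝒢.s (𝒢.inv (p₂ g)) = 𝒢.r (𝒢.inv (p₁ g))) :
    𝒢.mul (𝒢.inv (p₂ g)) (𝒢.inv (p₁ g)) h = 𝒢.inv g := by
  rw [← 𝒢.mul_inv_rev (mp.comp g), ← mp.decomp g]

theorem s_rAct (mp : 𝒢.MatchPair H K p₁ p₂) {k h : G} (hc : 𝒢.s k = 𝒢.r h) :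
    𝒢.s (𝒢.rAct p₁ k h hc) = 𝒢.r (𝒢.lAct p₂ k h hc) :=
  mp.comp _

theorem r_rAct (mp : 𝒢.MatchPair H K p₁ p₂) {k h : G} (hc : 𝒢.s k = 𝒢.r h) :
    𝒢.r (𝒢.rAct p₁ k h hc) = 𝒢.r k := by
  rw [rAct, mp.r_p₁, r_mul]

theorem rAct_mul_lAct (mp : 𝒢.MatchPair H K p₁ p₂) {k h : G} (hc : 𝒢.s k = 𝒢.r h) :
    𝒢.mul (𝒢.rAct p₁ k h hc) (𝒢.lAct p₂ k h hc) (mp.s_rAct hc) = 𝒢.mul k h hc :=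
  (mp.decomp _).symm

theorem mul_mul_eq_rAct_mul_lAct (mp : 𝒢.MatchPair H K p₁ p₂) {k h h' : G}
    (hc : 𝒢.s k = 𝒢.r h) (hh : 𝒢.s h = 𝒢.r h') (hk : 𝒢.s k = 𝒢.r (𝒢.mul h h' hh))
    (hc' : 𝒢.s (𝒢.lAct p₂ k h hc) = 𝒢.r h')
    (hc'' : 𝒢.s (𝒢.rAct p₁ k h hc) = 𝒢.r (𝒢.rAct p₁ (𝒢.lAct p₂ k h hc) h' hc')) :
    𝒢.mul k (𝒢.mul h h' hh) hk =
      𝒢.mul (𝒢.mul (𝒢.rAct p₁ k h hc) (𝒢.rAct p₁ (𝒢.lAct p₂ k h hc) h' hc') hc'')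
        (𝒢.lAct p₂ (𝒢.lAct p₂ k h hc) h' hc') (by rw [s_mul]; exact mp.s_rAct _) :=
  calc 𝒢.mul k (𝒢.mul h h' hh) hk
      = 𝒢.mul (𝒢.mul k h hc) h' (by simpa using hh) := (𝒢.mul_assoc _ _ _ _ _ _ _).symm
    _ = 𝒢.mul (𝒢.mul (𝒢.rAct p₁ k h hc) (𝒢.lAct p₂ k h hc) (mp.s_rAct hc)) h'
          (by rw [s_mul]; exact hc') := by
        congr 1; exact (mp.rAct_mul_lAct _).symm
    _ = 𝒢.mul (𝒢.rAct p₁ k h hc) (𝒢.mul (𝒢.lAct p₂ k h hc) h' hc')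
          (by rw [r_mul]; exact mp.s_rAct hc) := 𝒢.mul_assoc _ _ _ _ _ _ _
    _ = 𝒢.mul (𝒢.rAct p₁ k h hc)
          (𝒢.mul (𝒢.rAct p₁ (𝒢.lAct p₂ k h hc) h' hc') (𝒢.lAct p₂ (𝒢.lAct p₂ k h hc) h' hc')
            (mp.s_rAct hc')) (by rw [r_mul]; exact hc'') := by
        congr 1; exact (mp.rAct_mul_lAct _).symm
    _ = _ := (𝒢.mul_assoc _ _ _ _ _ _ _).symm

theorem rAct_mul (mp : 𝒢.MatchPair H K p₁ p₂) {k h h' : G}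
    (hc : 𝒢.s k = 𝒢.r h) (hh : 𝒢.s h = 𝒢.r h') (hk : 𝒢.s k = 𝒢.r (𝒢.mul h h' hh))
    (hc' : 𝒢.s (𝒢.lAct p₂ k h hc) = 𝒢.r h')
    (hc'' : 𝒢.s (𝒢.rAct p₁ k h hc) = 𝒢.r (𝒢.rAct p₁ (𝒢.lAct p₂ k h hc) h' hc')) :
    𝒢.rAct p₁ k (𝒢.mul h h' hh) hk =
      𝒢.mul (𝒢.rAct p₁ k h hc) (𝒢.rAct p₁ (𝒢.lAct p₂ k h hc) h' hc') hc'' := by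
  rw [rAct, mp.mul_mul_eq_rAct_mul_lAct hc hh hk hc' hc'']
  exact (mp.uniq _ (mp.subH.mul_mem _ _ _ (mp.p₁_mem _) (mp.p₁_mem _)) _ (mp.p₂_mem _) _).1

theorem lAct_mul (mp : 𝒢.MatchPair H K p₁ p₂) {k h h' : G}
    (hc : 𝒢.s k = 𝒢.r h) (hh : 𝒢.s h = 𝒢.r h') (hk : 𝒢.s k = 𝒢.r (𝒢.mul h h' hh))
    (hc' : 𝒢.s (𝒢.lAct p₂ k h hc) = 𝒢.r h') :
    𝒢.lAct p₂ k (𝒢.mul h h' hh) hk = 𝒢.lAct p₂ (𝒢.lAct p₂ k h hc) h' hc' := by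
  have hc'' : 𝒢.s (𝒢.rAct p₁ k h hc) = 𝒢.r (𝒢.rAct p₁ (𝒢.lAct p₂ k h hc) h' hc') := by
    rw [mp.s_rAct, mp.r_rAct]
  rw [lAct, mp.mul_mul_eq_rAct_mul_lAct hc hh hk hc' hc'']
  exact (mp.uniq _ (mp.subH.mul_mem _ _ _ (mp.p₁_mem _) (mp.p₁_mem _)) _ (mp.p₂_mem _) _).2

end MatchPair

theorem coe_kappaT (mp : 𝒢.MatchPair H K p₁ p₂) (t : ↥(𝒢.Tset H K)) :
    (𝒢.kappaT mp t).1 = (𝒢.inv (𝒢.lAct p₂ t.1.1 t.1.2 t.prop.2.2),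
      𝒢.inv (𝒢.rAct p₁ t.1.1 t.1.2 t.prop.2.2)) :=
  rfl

theorem kappaT_mul (mp : 𝒢.MatchPair H K p₁ p₂) (t : ↥(𝒢.Tset H K)) :
    𝒢.mul (𝒢.kappaT mp t).1.1 (𝒢.kappaT mp t).1.2 (𝒢.kappaT mp t).prop.2.2 =
      𝒢.inv (𝒢.mul t.1.1 t.1.2 t.prop.2.2) :=
  mp.inv_p₂_mul_inv_p₁ _ _

theorem kappaT_kappaT (mp : 𝒢.MatchPair H K p₁ p₂) (t : ↥(𝒢.Tset H K)) :
    𝒢.kappaT mp (𝒢.kappaT mp t) = t := by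
  obtain ⟨hp₁, hp₂⟩ := mp.p_inv_mul t.prop.1 t.prop.2.1 t.prop.2.2
  apply Subtype.ext
  rw [coe_kappaT, lAct, rAct, kappaT_mul, hp₁, hp₂, inv_inv, inv_inv]

theorem kappaT_involutive (mp : 𝒢.MatchPair H K p₁ p₂) :
    Function.Involutive (𝒢.kappaT mp) :=
  𝒢.kappaT_kappaT mp

/-- `IsConvProduct p₂ t a b` says that `χ_a ⋆ χ_b = χ_t`. -/
def IsConvProduct (p₂ : G → G) (t a b : ↥(𝒢.Tset H K)) : Prop :=
  ∃ hd : 𝒢.s a.1.2 = 𝒢.r b.1.2,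
    b.1.1 = 𝒢.lAct p₂ a.1.1 a.1.2 a.prop.2.2 ∧ t.1 = (a.1.1, 𝒢.mul a.1.2 b.1.2 hd)

theorem IsConvProduct.kappaT (mp : 𝒢.MatchPair H K p₁ p₂) {t a b : ↥(𝒢.Tset H K)}
    (hab : 𝒢.IsConvProduct p₂ t a b) :
    𝒢.IsConvProduct p₂ (𝒢.kappaT mp t) (𝒢.kappaT mp b) (𝒢.kappaT mp a) := by
  obtain ⟨⟨k, h⟩, hk, hh, hc⟩ := a
  obtain ⟨⟨k', h'⟩, hk', hh', hc'⟩ := b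
  obtain ⟨t, ht⟩ := t
  obtain ⟨hd, rfl, rfl⟩ := hab
  have hc'' : 𝒢.s (𝒢.rAct p₁ k h hc) = 𝒢.r (𝒢.rAct p₁ (𝒢.lAct p₂ k h hc) h' hc') := by
    rw [mp.s_rAct, mp.r_rAct]
  obtain ⟨-, hp₂⟩ := mp.p_inv_mul hk' hh' hc'
  have hd' : 𝒢.s (𝒢.inv (𝒢.rAct p₁ (𝒢.lAct p₂ k h hc) h' hc')) =
      𝒢.r (𝒢.inv (𝒢.rAct p₁ k h hc)) := by
    simpa using hc''.symm
  refine ⟨hd', ?_, ?_⟩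
  · simp only [lAct, kappaT_mul]
    exact hp₂.symm
  refine Prod.ext ?_ ?_
  · show 𝒢.inv (𝒢.lAct p₂ k (𝒢.mul h h' hd) _) = 𝒢.inv (𝒢.lAct p₂ (𝒢.lAct p₂ k h hc) h' hc')
    rw [mp.lAct_mul hc hd _ hc']
  · show 𝒢.inv (𝒢.rAct p₁ k (𝒢.mul h h' hd) _) =
      𝒢.mul (𝒢.inv (𝒢.rAct p₁ (𝒢.lAct p₂ k h hc) h' hc')) (𝒢.inv (𝒢.rAct p₁ k h hc)) hd'
    rw [mp.rAct_mul hc hd _ hc' hc'', mul_inv_rev _ hc'' hd']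

theorem isConvProduct_kappaT_iff (mp : 𝒢.MatchPair H K p₁ p₂) {t a b : ↥(𝒢.Tset H K)} :
    𝒢.IsConvProduct p₂ (𝒢.kappaT mp t) (𝒢.kappaT mp b) (𝒢.kappaT mp a) ↔
      𝒢.IsConvProduct p₂ t a b := by
  refine ⟨fun h => ?_, IsConvProduct.kappaT 𝒢 mp⟩
  simpa only [kappaT_kappaT] using h.kappaT 𝒢 mp

variable [Fintype G]

theorem conv_apply (F F' : ↥(𝒢.Tset H K) → ℂ) (t : ↥(𝒢.Tset H K)) :
    𝒢.conv p₂ F F' t = ∑ a, ∑ b, if 𝒢.IsConvProduct p₂ t a b then F a * F' b else 0 := by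
  refine Finset.sum_congr rfl fun a _ => Finset.sum_congr rfl fun b _ => ?_
  unfold IsConvProduct
  split_ifs <;> simp_all

theorem _root_.Function.Involutive.sum_sum_swap {α M : Type*} [Fintype α] [AddCommMonoid M]
    {σ : α → α} (hσ : Function.Involutive σ) (f : α → α → M) :
    ∑ a, ∑ b, f a b = ∑ a, ∑ b, f (σ b) (σ a) := by
  rw [Finset.sum_comm]
  exact Fintype.sum_bijective σ hσ.bijective _ _ fun b =>
    Fintype.sum_bijective σ hσ.bijective _ _ fun a => by rw [hσ, hσ]

/-- `κ(χ_{(k,h)}) = χ_{((k◁h)⁻¹,(k▷h)⁻¹)}` defines an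
anti-automorphism of the vertical convolution algebra `ℂT` with `κ² = id`. -/
theorem stmt11 (mp : 𝒢.MatchPair H K p₁ p₂) :
    (∀ t : ↥(𝒢.Tset H K), 𝒢.kappaT mp (𝒢.kappaT mp t) = t) ∧
    (∀ F F' : ↥(𝒢.Tset H K) → ℂ,
      (fun t => 𝒢.conv p₂ F F' (𝒢.kappaT mp t)) =
        𝒢.conv p₂ (fun t => F' (𝒢.kappaT mp t)) (fun t => F (𝒢.kappaT mp t))) := by
  refine ⟨𝒢.kappaT_kappaT mp, fun F F' => funext fun t => ?_⟩
  rw [conv_apply, conv_apply, (𝒢.kappaT_involutive mp).sum_sum_swap]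
  refine Finset.sum_congr rfl fun a _ => Finset.sum_congr rfl fun b _ => ?_
  simp only [𝒢.isConvProduct_kappaT_iff mp, mul_comm]

end
end Gpd
end

section
/- Let G be a finite groupoid and I_G the operator on ℓ²(G×G) defined by (I_G ξ)(x,y) = ξ(xy,y) if s(x) = r(y), 0 otherwise. Then I_G satisfies the pentagonal relation (I_G)₁₂(I_G)₁₃(I_G)₂₃ = (I_G)₂₃(I_G)₁₂ as operators on ℓ²(G×G×G). -/
namespace Gpd

noncomputable section
attribute [local instance] Classical.propDecidable

variable {G : Type*} (𝒢 : Gpd G)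

/-- The leg `(I_G)₁₂` of `I_G` on `ℓ²(G × G × G)`. -/
def IG12 : ((G × G × G) → ℂ) → ((G × G × G) → ℂ) := fun ξ p =>
  if hc : 𝒢.s p.1 = 𝒢.r p.2.1 then ξ (𝒢.mul p.1 p.2.1 hc, p.2.1, p.2.2) else 0

/-- The leg `(I_G)₂₃` of `I_G` on `ℓ²(G × G × G)`. -/
def IG23 : ((G × G × G) → ℂ) → ((G × G × G) → ℂ) := fun ξ p =>
  if hc : 𝒢.s p.2.1 = 𝒢.r p.2.2 then ξ (p.1, 𝒢.mul p.2.1 p.2.2 hc, p.2.2) else 0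

/-- The leg `(I_G)₁₃` of `I_G` on `ℓ²(G × G × G)`. -/
def IG13 : ((G × G × G) → ℂ) → ((G × G × G) → ℂ) := fun ξ p =>
  if hc : 𝒢.s p.1 = 𝒢.r p.2.2 then ξ (𝒢.mul p.1 p.2.2 hc, p.2.1, p.2.2) else 0

theorem s_mul_eq_r_iff {x y : G} (hxy : 𝒢.s x = 𝒢.r y) (z : G) :
    𝒢.s (𝒢.mul x y hxy) = 𝒢.r z ↔ 𝒢.s y = 𝒢.r z := by
  rw [𝒢.s_mul]

theorem s_eq_r_mul_iff (x : G) {y z : G} (hyz : 𝒢.s y = 𝒢.r z) :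
    𝒢.s x = 𝒢.r (𝒢.mul y z hyz) ↔ 𝒢.s x = 𝒢.r y := by
  rw [𝒢.r_mul]

theorem IG12_IG13_IG23_apply (ξ : (G × G × G) → ℂ) (x y z : G) :
    𝒢.IG12 (𝒢.IG13 (𝒢.IG23 ξ)) (x, y, z) =
      if h : 𝒢.s x = 𝒢.r y ∧ 𝒢.s y = 𝒢.r z then
        ξ (𝒢.mul (𝒢.mul x y h.1) z ((𝒢.s_mul_eq_r_iff h.1 z).2 h.2), 𝒢.mul y z h.2, z)
      else 0 := by
  simp only [IG12]
  by_cases hxy : 𝒢.s x = 𝒢.r y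
  · simp only [IG13, IG23, dif_pos hxy]
    by_cases hyz : 𝒢.s y = 𝒢.r z
    · rw [dif_pos ((𝒢.s_mul_eq_r_iff hxy z).2 hyz), dif_pos hyz, dif_pos ⟨hxy, hyz⟩]
    · rw [dif_neg (mt (𝒢.s_mul_eq_r_iff hxy z).1 hyz), dif_neg (fun h => hyz h.2)]
  · rw [dif_neg hxy, dif_neg (fun h => hxy h.1)]

theorem IG23_IG12_apply (ξ : (G × G × G) → ℂ) (x y z : G) :
    𝒢.IG23 (𝒢.IG12 ξ) (x, y, z) =
      if h : 𝒢.s x = 𝒢.r y ∧ 𝒢.s y = 𝒢.r z then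
        ξ (𝒢.mul x (𝒢.mul y z h.2) ((𝒢.s_eq_r_mul_iff x h.2).2 h.1), 𝒢.mul y z h.2, z)
      else 0 := by
  simp only [IG23]
  by_cases hyz : 𝒢.s y = 𝒢.r z
  · simp only [IG12, dif_pos hyz]
    by_cases hxy : 𝒢.s x = 𝒢.r y
    · rw [dif_pos ((𝒢.s_eq_r_mul_iff x hyz).2 hxy), dif_pos ⟨hxy, hyz⟩]
    · rw [dif_neg (mt (𝒢.s_eq_r_mul_iff x hyz).1 hxy), dif_neg (fun h => hxy h.1)]
  · rw [dif_neg hyz, dif_neg (fun h => hyz h.2)]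

theorem stmt13 :
    ∀ ξ : (G × G × G) → ℂ, 𝒢.IG12 (𝒢.IG13 (𝒢.IG23 ξ)) = 𝒢.IG23 (𝒢.IG12 ξ) := by
  intro ξ
  funext ⟨x, y, z⟩
  rw [IG12_IG13_IG23_apply, IG23_IG12_apply]
  split_ifs
  · rw [𝒢.mul_assoc]
  · rfl

end

end Gpd
end

section
/- Let (H,K) be a match pair of finite groupoids for G with projections p₁ : G → H, p₂ : G → K and middle map m. Define I on ℓ²(G×G) by (Iξ)(x,y) = ξ(x·p₁(p₂(x)⁻¹y), p₂(x)⁻¹y) if m(x) = r(y) and 0 otherwise. Then I*I is the orthogonal projection onto {ξ : ξ(x,y) = 0 unless s(x) = m(y)} and II* is the orthogonal projection onto {ξ : ξ(x,y) = 0 unless m(x) = r(y)}; in particular I is a partial isometry. -/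
namespace Gpd

noncomputable section
attribute [local instance] Classical.propDecidable

variable {G : Type*} (𝒢 : Gpd G) {H K : Set G} {p₁ p₂ : G → G}

/-- The multiplicative partial isometry of a match pair:
`(Iξ)(x,y) = ξ(x·p₁(p₂(x)⁻¹y), p₂(x)⁻¹y)` if `m x = r y`, `0` otherwise. -/
def IMP (mp : 𝒢.MatchPair H K p₁ p₂) : ((G × G) → ℂ) → ((G × G) → ℂ) :=
  fun ξ p =>
    if hm : 𝒢.s (p₁ p.1) = 𝒢.r p.2 then
      have h1 : 𝒢.s (𝒢.inv (p₂ p.1)) = 𝒢.r p.2 := by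
        rw [𝒢.s_inv, ← mp.comp p.1]; exact hm
      have h2 : 𝒢.s p.1 = 𝒢.r (p₁ (𝒢.mul (𝒢.inv (p₂ p.1)) p.2 h1)) := by
        rw [mp.r_p₁, 𝒢.r_mul, 𝒢.r_inv, mp.s_p₂]
      ξ (𝒢.mul p.1 (p₁ (𝒢.mul (𝒢.inv (p₂ p.1)) p.2 h1)) h2,
        𝒢.mul (𝒢.inv (p₂ p.1)) p.2 h1)
    else 0

/-- The adjoint: `(I*ξ)(x,y) = ξ(x·p₁(y)⁻¹, p₂(x·p₁(y)⁻¹)·y)` if `s x = m y`,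
`0` otherwise. -/
def IMPstar (mp : 𝒢.MatchPair H K p₁ p₂) : ((G × G) → ℂ) → ((G × G) → ℂ) :=
  fun ξ p =>
    if hm : 𝒢.s p.1 = 𝒢.s (p₁ p.2) then
      have hA : 𝒢.s p.1 = 𝒢.r (𝒢.inv (p₁ p.2)) := by rw [𝒢.r_inv]; exact hm
      have hB : 𝒢.s (p₂ (𝒢.mul p.1 (𝒢.inv (p₁ p.2)) hA)) = 𝒢.r p.2 := by
        rw [mp.s_p₂, 𝒢.s_mul, 𝒢.s_inv, mp.r_p₁]
      ξ (𝒢.mul p.1 (𝒢.inv (p₁ p.2)) hA,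
        𝒢.mul (p₂ (𝒢.mul p.1 (𝒢.inv (p₁ p.2)) hA)) p.2 hB)
    else 0

end

end Gpd

/-! `I` and `I*` have the form `ξ ↦ 1_F · (ξ ∘ Φ)` and `ξ ↦ 1_E · (ξ ∘ Ψ)`, where
`F = {m x = r y}` and `E = {s x = m y}` are the final and initial sets, `Φ (x, y) = (x · p₁ z, z)`
with `z = p₂(x)⁻¹ · y`, and `Ψ (x, y) = (w, p₂ w · y)` with `w = x · p₁(y)⁻¹`. The cancellation
laws of the groupoid make `Φ : F → E` and `Ψ : E → F` mutually inverse bijections. Reindexing the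
inner product along `Φ` then identifies `I*` as the adjoint of `I`, and `I*I`, `II*` are
multiplication by `1_E`, `1_F`. -/

namespace Set

variable {α β R : Type*} {A : Set α} {B : Set β} {Φ : α → β} {Ψ : β → α}

theorem indicator_comp_indicator_comp_of_leftInvOn [Zero R] (h : LeftInvOn Φ Ψ B)
    (hΨ : MapsTo Ψ B A) (ξ : β → R) :
    B.indicator (A.indicator (ξ ∘ Φ) ∘ Ψ) = B.indicator ξ := by
  funext b
  by_cases hb : b ∈ B
  · simp [hb, hΨ hb, h hb]
  · simp [hb]

theorem sum_star_indicator_comp_mul_of_invOn [Fintype α] [Fintype β]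
    [NonUnitalNonAssocSemiring R] [StarRing R] (h : InvOn Ψ Φ A B) (hΦ : MapsTo Φ A B)
    (hΨ : MapsTo Ψ B A) (ξ : β → R) (η : α → R) :
    ∑ a, star (A.indicator (ξ ∘ Φ) a) * η a = ∑ b, star (ξ b) * B.indicator (η ∘ Ψ) b := by
  have hA : ∀ a, star (A.indicator (ξ ∘ Φ) a) * η a =
      A.indicator (fun a ↦ star (ξ (Φ a)) * η a) a := by
    intro a; by_cases ha : a ∈ A <;> simp [ha]
  have hB : ∀ b, star (ξ b) * B.indicator (η ∘ Ψ) b =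
      B.indicator (fun b ↦ star (ξ b) * η (Ψ b)) b := by
    intro b; by_cases hb : b ∈ B <;> simp [hb]
  simp only [hA, hB, ← finsum_eq_sum_of_fintype, ← finsum_mem_def]
  exact finsum_mem_eq_of_bijOn Φ (h.bijOn hΦ hΨ) fun a ha ↦ by rw [h.1 ha]

end Set

namespace Gpd

variable {G : Type*} (𝒢 : Gpd G)

theorem mul_inv_cancel_right_s14 (a b : G) (h : 𝒢.s a = 𝒢.r b)
    (h' : 𝒢.s (𝒢.mul a b h) = 𝒢.r (𝒢.inv b)) :
    𝒢.mul (𝒢.mul a b h) (𝒢.inv b) h' = a := by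
  rw [𝒢.mul_assoc a b (𝒢.inv b) h (𝒢.r_inv b).symm h' (by rw [𝒢.r_mul]; exact h)]
  simp only [𝒢.mul_inv, ← h, 𝒢.mul_source]

theorem inv_mul_cancel_right (a b : G) (h : 𝒢.s a = 𝒢.r (𝒢.inv b))
    (h' : 𝒢.s (𝒢.mul a (𝒢.inv b) h) = 𝒢.r b) :
    𝒢.mul (𝒢.mul a (𝒢.inv b) h) b h' = a := by
  have hsb : 𝒢.s b = 𝒢.s a := (h.trans (𝒢.r_inv b)).symm
  rw [𝒢.mul_assoc a (𝒢.inv b) b h (𝒢.s_inv b) h' (by rw [𝒢.r_mul]; exact h)]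
  simp only [𝒢.inv_mul, hsb, 𝒢.mul_source]

theorem mul_inv_cancel_left_s14 (a c : G) (h : 𝒢.s (𝒢.inv a) = 𝒢.r c)
    (h' : 𝒢.s a = 𝒢.r (𝒢.mul (𝒢.inv a) c h)) :
    𝒢.mul a (𝒢.mul (𝒢.inv a) c h) h' = c := by
  have hra : 𝒢.r a = 𝒢.r c := (𝒢.s_inv a).symm.trans h
  rw [← 𝒢.mul_assoc a (𝒢.inv a) c (𝒢.r_inv a).symm h (by rw [𝒢.s_mul]; exact h) h']
  simp only [𝒢.mul_inv, hra, 𝒢.range_mul]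

theorem inv_mul_cancel_left_s14 (a c : G) (h : 𝒢.s a = 𝒢.r c)
    (h' : 𝒢.s (𝒢.inv a) = 𝒢.r (𝒢.mul a c h)) :
    𝒢.mul (𝒢.inv a) (𝒢.mul a c h) h' = c := by
  rw [← 𝒢.mul_assoc (𝒢.inv a) a c (𝒢.s_inv a) h (by rw [𝒢.s_mul]; exact h) h']
  simp only [𝒢.inv_mul, h, 𝒢.range_mul]

def finalSet (p₁ : G → G) : Set (G × G) := {p | 𝒢.s (p₁ p.1) = 𝒢.r p.2}

def initialSet (p₁ : G → G) : Set (G × G) := {p | 𝒢.s p.1 = 𝒢.s (p₁ p.2)}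

noncomputable section
attribute [local instance] Classical.propDecidable

variable {H K : Set G} {p₁ p₂ : G → G}

def IMPmap (mp : 𝒢.MatchPair H K p₁ p₂) (p : G × G) : G × G :=
  if hm : 𝒢.s (p₁ p.1) = 𝒢.r p.2 then
    have h1 : 𝒢.s (𝒢.inv (p₂ p.1)) = 𝒢.r p.2 := by
      rw [𝒢.s_inv, ← mp.comp p.1]; exact hm
    have h2 : 𝒢.s p.1 = 𝒢.r (p₁ (𝒢.mul (𝒢.inv (p₂ p.1)) p.2 h1)) := by
      rw [mp.r_p₁, 𝒢.r_mul, 𝒢.r_inv, mp.s_p₂]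
    (𝒢.mul p.1 (p₁ (𝒢.mul (𝒢.inv (p₂ p.1)) p.2 h1)) h2,
      𝒢.mul (𝒢.inv (p₂ p.1)) p.2 h1)
  else p

def IMPstarMap (mp : 𝒢.MatchPair H K p₁ p₂) (p : G × G) : G × G :=
  if hm : 𝒢.s p.1 = 𝒢.s (p₁ p.2) then
    have hA : 𝒢.s p.1 = 𝒢.r (𝒢.inv (p₁ p.2)) := by rw [𝒢.r_inv]; exact hm
    have hB : 𝒢.s (p₂ (𝒢.mul p.1 (𝒢.inv (p₁ p.2)) hA)) = 𝒢.r p.2 := by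
      rw [mp.s_p₂, 𝒢.s_mul, 𝒢.s_inv, mp.r_p₁]
    (𝒢.mul p.1 (𝒢.inv (p₁ p.2)) hA,
      𝒢.mul (p₂ (𝒢.mul p.1 (𝒢.inv (p₁ p.2)) hA)) p.2 hB)
  else p

theorem IMP_eq_indicator (mp : 𝒢.MatchPair H K p₁ p₂) (ξ : G × G → ℂ) :
    𝒢.IMP mp ξ = (𝒢.finalSet p₁).indicator (ξ ∘ 𝒢.IMPmap mp) := by
  funext p
  by_cases hp : 𝒢.s (p₁ p.1) = 𝒢.r p.2
  · rw [Set.indicator_of_mem (show p ∈ 𝒢.finalSet p₁ from hp)]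
    simp only [IMP, IMPmap, dif_pos hp, Function.comp_apply]
  · rw [Set.indicator_of_notMem (show p ∉ 𝒢.finalSet p₁ from hp)]
    simp only [IMP, dif_neg hp]

theorem IMPstar_eq_indicator (mp : 𝒢.MatchPair H K p₁ p₂) (ξ : G × G → ℂ) :
    𝒢.IMPstar mp ξ = (𝒢.initialSet p₁).indicator (ξ ∘ 𝒢.IMPstarMap mp) := by
  funext p
  by_cases hp : 𝒢.s p.1 = 𝒢.s (p₁ p.2)
  · rw [Set.indicator_of_mem (show p ∈ 𝒢.initialSet p₁ from hp)]
    simp only [IMPstar, IMPstarMap, dif_pos hp, Function.comp_apply]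
  · rw [Set.indicator_of_notMem (show p ∉ 𝒢.initialSet p₁ from hp)]
    simp only [IMPstar, dif_neg hp]

theorem mapsTo_IMPmap (mp : 𝒢.MatchPair H K p₁ p₂) :
    Set.MapsTo (𝒢.IMPmap mp) (𝒢.finalSet p₁) (𝒢.initialSet p₁) := by
  intro p (hp : 𝒢.s (p₁ p.1) = 𝒢.r p.2)
  show 𝒢.s (𝒢.IMPmap mp p).1 = 𝒢.s (p₁ (𝒢.IMPmap mp p).2)
  simp only [IMPmap, dif_pos hp, 𝒢.s_mul]

theorem mapsTo_IMPstarMap (mp : 𝒢.MatchPair H K p₁ p₂) :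
    Set.MapsTo (𝒢.IMPstarMap mp) (𝒢.initialSet p₁) (𝒢.finalSet p₁) := by
  intro p (hp : 𝒢.s p.1 = 𝒢.s (p₁ p.2))
  show 𝒢.s (p₁ (𝒢.IMPstarMap mp p).1) = 𝒢.r (𝒢.IMPstarMap mp p).2
  simp only [IMPstarMap, dif_pos hp, 𝒢.r_mul]
  exact mp.comp _

theorem leftInvOn_IMPstarMap_IMPmap (mp : 𝒢.MatchPair H K p₁ p₂) :
    Set.LeftInvOn (𝒢.IMPstarMap mp) (𝒢.IMPmap mp) (𝒢.finalSet p₁) := by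
  intro p (hp : 𝒢.s (p₁ p.1) = 𝒢.r p.2)
  have hp' : 𝒢.s (𝒢.IMPmap mp p).1 = 𝒢.s (p₁ (𝒢.IMPmap mp p).2) := 𝒢.mapsTo_IMPmap mp hp
  simp only [IMPmap, dif_pos hp] at hp' ⊢
  simp only [IMPstarMap, dif_pos hp', 𝒢.mul_inv_cancel_right_s14, 𝒢.mul_inv_cancel_left_s14]

theorem rightInvOn_IMPstarMap_IMPmap (mp : 𝒢.MatchPair H K p₁ p₂) :
    Set.RightInvOn (𝒢.IMPstarMap mp) (𝒢.IMPmap mp) (𝒢.initialSet p₁) := by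
  intro p (hp : 𝒢.s p.1 = 𝒢.s (p₁ p.2))
  have hp' : 𝒢.s (p₁ (𝒢.IMPstarMap mp p).1) = 𝒢.r (𝒢.IMPstarMap mp p).2 :=
    𝒢.mapsTo_IMPstarMap mp hp
  simp only [IMPstarMap, dif_pos hp] at hp' ⊢
  simp only [IMPmap, dif_pos hp', 𝒢.inv_mul_cancel_left_s14, 𝒢.inv_mul_cancel_right]

theorem IMPstar_IMP (mp : 𝒢.MatchPair H K p₁ p₂) (ξ : G × G → ℂ) :
    𝒢.IMPstar mp (𝒢.IMP mp ξ) = (𝒢.initialSet p₁).indicator ξ := by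
  rw [IMP_eq_indicator, IMPstar_eq_indicator]
  exact Set.indicator_comp_indicator_comp_of_leftInvOn (𝒢.rightInvOn_IMPstarMap_IMPmap mp)
    (𝒢.mapsTo_IMPstarMap mp) ξ

theorem IMP_IMPstar (mp : 𝒢.MatchPair H K p₁ p₂) (ξ : G × G → ℂ) :
    𝒢.IMP mp (𝒢.IMPstar mp ξ) = (𝒢.finalSet p₁).indicator ξ := by
  rw [IMP_eq_indicator, IMPstar_eq_indicator]
  exact Set.indicator_comp_indicator_comp_of_leftInvOn (𝒢.leftInvOn_IMPstarMap_IMPmap mp)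
    (𝒢.mapsTo_IMPmap mp) ξ

/-- `I*` is the adjoint of `I`; `I*I` is the orthogonal
projection onto `{ξ : ξ(x,y) = 0 unless s x = m y}`, `II*` is the orthogonal
projection onto `{ξ : ξ(x,y) = 0 unless m x = r y}`; in particular `I` is a
partial isometry (`II*I = I`). -/
theorem stmt14 [Fintype G] (mp : 𝒢.MatchPair H K p₁ p₂) :
    (∀ ξ η : (G × G) → ℂ,
      ∑ p : G × G, (starRingEnd ℂ) (𝒢.IMP mp ξ p) * η p =
        ∑ p : G × G, (starRingEnd ℂ) (ξ p) * 𝒢.IMPstar mp η p) ∧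
    (∀ (ξ : (G × G) → ℂ) (p : G × G),
      𝒢.IMPstar mp (𝒢.IMP mp ξ) p =
        if 𝒢.s p.1 = 𝒢.s (p₁ p.2) then ξ p else 0) ∧
    (∀ ξ : (G × G) → ℂ,
      (𝒢.IMPstar mp (𝒢.IMP mp ξ) = ξ ↔
        ∀ p : G × G, ¬ 𝒢.s p.1 = 𝒢.s (p₁ p.2) → ξ p = 0)) ∧
    (∀ (ξ : (G × G) → ℂ) (p : G × G),
      𝒢.IMP mp (𝒢.IMPstar mp ξ) p =
        if 𝒢.s (p₁ p.1) = 𝒢.r p.2 then ξ p else 0) ∧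
    (∀ ξ : (G × G) → ℂ,
      (𝒢.IMP mp (𝒢.IMPstar mp ξ) = ξ ↔
        ∀ p : G × G, ¬ 𝒢.s (p₁ p.1) = 𝒢.r p.2 → ξ p = 0)) ∧
    (∀ ξ : (G × G) → ℂ, 𝒢.IMP mp (𝒢.IMPstar mp (𝒢.IMP mp ξ)) = 𝒢.IMP mp ξ) := by
  refine ⟨fun ξ η ↦ ?_, fun ξ p ↦ ?_, fun ξ ↦ ?_, fun ξ p ↦ ?_, fun ξ ↦ ?_, fun ξ ↦ ?_⟩
  · simp only [starRingEnd_apply, IMP_eq_indicator, IMPstar_eq_indicator]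
    exact Set.sum_star_indicator_comp_mul_of_invOn
      ⟨𝒢.leftInvOn_IMPstarMap_IMPmap mp, 𝒢.rightInvOn_IMPstarMap_IMPmap mp⟩
      (𝒢.mapsTo_IMPmap mp) (𝒢.mapsTo_IMPstarMap mp) ξ η
  · rw [IMPstar_IMP, Set.indicator_apply]; rfl
  · rw [IMPstar_IMP, Set.indicator_eq_self, Function.support_subset_iff']; rfl
  · rw [IMP_IMPstar, Set.indicator_apply]; rfl
  · rw [IMP_IMPstar, Set.indicator_eq_self, Function.support_subset_iff']; rfl
  · rw [IMP_IMPstar, IMP_eq_indicator, Set.indicator_indicator, Set.inter_self]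

end

end Gpd
end

section
/- Let a finite groupoid G act on a direct sum von Neumann algebra A = ⊕_{u∈G⁰} A_u via isomorphisms α_g : A_{s(g)} → A_{r(g)} with α_{gg'} = α_g ∘ α_{g'} for composable g, g'. An element x = Σ_{h∈G} δ(x^h)(1 ⊗ ρ(h)) of the crossed product (with x^h ∈ A_{r(h)}), where each A_u is a factor, commutes with δ(A) if and only if for every h with s(h) ≠ r(h) one has x^h = 0, and for every h with s(h) = r(h) and x^h ≠ 0, x^h is invertible and α_h(a) = (x^h)⁻¹ a x^h for all a ∈ A_{r(h)}. -/
/-!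
Testing the commutation relation `a_{r h} x^h = x^h α_h(a_{s h})` on elements of `A` supported at
a single unit decouples it into one condition per arrow `h`. If `s h ≠ r h`, taking `a = 1` at
`r h` and `0` at `s h` forces `x^h = 0`. If `s h = r h`, the relation says that `x^h` is twisted
central in the factor `A_{r h}`: `b x^h = x^h α_h(b)`. Then `A_{r h} x^h = x^h A_{r h}` is a
two-sided ideal, hence all of `A_{r h}` when `x^h ≠ 0`, so `x^h` has a left and a right inverse,
and `α_h` is conjugation by it.
-/

namespace IsSimpleRing

variable {R : Type*} [Ring R] [IsSimpleRing R] {x : R}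

theorem exists_mul_eq_one_of_forall_exists_mul_eq (hx : x ≠ 0)
    (h : ∀ b, ∃ c, x * b = c * x) : ∃ y, y * x = 1 := by
  have : (Ideal.span {x}).IsTwoSided := ⟨fun b hmem => by
    obtain ⟨a, rfl⟩ := Ideal.mem_span_singleton'.mp hmem
    obtain ⟨c, hc⟩ := h b
    exact Ideal.mem_span_singleton'.mpr ⟨a * c, by rw [mul_assoc, mul_assoc, hc]⟩⟩
  have hone := one_mem_of_ne_zero_mem (Ideal.span {x}).toTwoSided hx
    (Ideal.mem_toTwoSided.mpr (Ideal.mem_span_singleton_self x))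
  exact Ideal.mem_span_singleton'.mp (Ideal.mem_toTwoSided.mp hone)

theorem exists_mul_eq_one_of_forall_exists_mul_eq' (hx : x ≠ 0)
    (h : ∀ b, ∃ c, b * x = x * c) : ∃ y, x * y = 1 := by
  obtain ⟨y, hy⟩ := exists_mul_eq_one_of_forall_exists_mul_eq (x := MulOpposite.op x)
    (MulOpposite.op_ne_zero_iff x |>.mpr hx) fun b => by
      obtain ⟨c, hc⟩ := h b.unop
      exact ⟨MulOpposite.op c, MulOpposite.unop_injective hc⟩
  exact ⟨y.unop, congrArg MulOpposite.unop hy⟩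

theorem isUnit_of_forall_mul_eq_mul_apply {φ : R → R} (hφ : Function.Surjective φ)
    (h : ∀ b, b * x = x * φ b) (hx : x ≠ 0) : IsUnit x := by
  obtain ⟨y, hyx⟩ := exists_mul_eq_one_of_forall_exists_mul_eq hx fun b => by
    obtain ⟨c, rfl⟩ := hφ b
    exact ⟨c, (h c).symm⟩
  obtain ⟨z, hxz⟩ := exists_mul_eq_one_of_forall_exists_mul_eq' hx fun b => ⟨φ b, h b⟩
  have hyz : y = z := left_inv_eq_right_inv hyx hxz
  exact ⟨⟨x, y, hyz ▸ hxz, hyx⟩, rfl⟩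

theorem forall_mul_eq_mul_apply_iff (f : R ≃+* R) (y : R) :
    (∀ b, b * y = y * f b) ↔
      (y ≠ 0 → IsUnit y ∧ ∀ b, f b = Ring.inverse y * b * y) := by
  constructor
  · intro h hy
    have hunit := isUnit_of_forall_mul_eq_mul_apply f.surjective h hy
    refine ⟨hunit, fun b => ?_⟩
    rw [mul_assoc, h, ← mul_assoc, Ring.inverse_mul_cancel y hunit, one_mul]
  · intro h b
    rcases eq_or_ne y 0 with rfl | hy
    · rw [mul_zero, zero_mul]
    · obtain ⟨hunit, hf⟩ := h hy
      rw [hf, ← mul_assoc, ← mul_assoc, Ring.mul_inverse_cancel y hunit, one_mul]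

end IsSimpleRing

theorem forall_pi_mul_eq_mul_apply_iff {ι : Type*} {A : ι → Type*} [∀ i, Ring (A i)]
    {u v : ι} [IsSimpleRing (A u)] (f : A v ≃+* A u) (y : A u) :
    (∀ a : ∀ i, A i, a u * y = y * f (a v)) ↔
      ((v ≠ u → y = 0) ∧
        ∀ e : v = u, y ≠ 0 →
          IsUnit y ∧ ∀ b : A u, f (cast (congrArg A e.symm) b) = Ring.inverse y * b * y) := by
  classical
  by_cases e : v = u
  · subst e
    simp only [ne_eq, not_true_eq_false, IsEmpty.forall_iff, true_and, cast_eq, forall_const,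
      ← IsSimpleRing.forall_mul_eq_mul_apply_iff]
    exact ⟨fun h b => by simpa using h (Pi.single v b), fun h a => h (a v)⟩
  · simp only [ne_eq, e, not_false_eq_true, forall_const, IsEmpty.forall_iff, and_true]
    refine ⟨fun h => by simpa [Pi.single_eq_of_ne e] using h (Pi.single u 1), ?_⟩
    rintro rfl a
    rw [mul_zero, zero_mul]

theorem stmt16_general {G : Type*} (𝒢 : Gpd G)
    (A : G → Type*) [∀ u, Ring (A u)]
    -- ... and no nontrivial (weakly closed) two-sided ideals
    (hsimple : ∀ u : G, IsSimpleOrder (TwoSidedIdeal (A u)))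
    -- the action of the groupoid: isomorphisms `α_g : A_{s g} ≃ A_{r g}` ...
    (α : ∀ g : G, A (𝒢.s g) ≃+* A (𝒢.r g))
    -- the coefficients `x^h ∈ A_{r h}` of an element of the crossed product
    (x : ∀ h : G, A (𝒢.r h)) :
    -- commutation with `δ(A)` ...
    (∀ (a : ∀ u : G, A u) (h : G),
        a (𝒢.r h) * x h = x h * α h (a (𝒢.s h))) ↔
    -- ... iff the coefficients vanish outside the isotropy and implement `α`
    ((∀ h : G, 𝒢.s h ≠ 𝒢.r h → x h = 0) ∧
      ∀ (h : G) (hiso : 𝒢.s h = 𝒢.r h), x h ≠ 0 →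
        IsUnit (x h) ∧
          ∀ a : A (𝒢.r h),
            α h (cast (congrArg A hiso.symm) a) = Ring.inverse (x h) * a * x h) := by
  have : ∀ u, IsSimpleRing (A u) := fun u => ⟨hsimple u⟩
  rw [forall_comm, ← forall_and]
  exact forall_congr' fun h => forall_pi_mul_eq_mul_apply_iff (α h) (x h)

/-- characterization of the elements of the crossed product
`A ⋊ C(G)` commuting with `δ(A)`, for an action `α` of a finite groupoid `G`
on `A = ⊕_u A_u` with each `A_u` a factor.  An element
`x = Σ_h δ(x^h)(1 ⊗ ρ(h))` commutes with `δ(A)` (equivalently, by the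
multiplication rule of the crossed product, `a_{r h} · x^h = x^h · α_h(a_{s h})`
for all `a` and `h`) iff `x^h = 0` for every non-isotropic `h`, and for every
isotropic `h` with `x^h ≠ 0`, `x^h` is invertible and
`α_h(a) = (x^h)⁻¹ a x^h` on `A_{r h}`. -/
theorem stmt16 {G : Type*} [Finite G] (𝒢 : Gpd G)
    (A : G → Type*) [∀ u, Ring (A u)] [∀ u, Algebra ℂ (A u)]
    -- each `A_u` is a factor: trivial center ...
    (hcenter : ∀ (u : G) (z : A u), (∀ a : A u, z * a = a * z) →
      ∃ c : ℂ, z = algebraMap ℂ (A u) c)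
    -- ... and no nontrivial (weakly closed) two-sided ideals
    (hsimple : ∀ u : G, IsSimpleOrder (TwoSidedIdeal (A u)))
    -- the action of the groupoid: isomorphisms `α_g : A_{s g} ≃ A_{r g}` ...
    (α : ∀ g : G, A (𝒢.s g) ≃+* A (𝒢.r g))
    -- ... which are functorial: `α_{g g'} = α_g ∘ α_{g'}`
    (hα : ∀ (g g' : G) (hc : 𝒢.s g = 𝒢.r g') (a : A (𝒢.s g')),
      α (𝒢.mul g g' hc) (cast (congrArg A (𝒢.s_mul g g' hc)).symm a) =
        cast (congrArg A (𝒢.r_mul g g' hc)).symm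
          (α g (cast (congrArg A hc.symm) (α g' a))))
    -- the coefficients `x^h ∈ A_{r h}` of an element of the crossed product
    (x : ∀ h : G, A (𝒢.r h)) :
    -- commutation with `δ(A)` ...
    (∀ (a : ∀ u : G, A u) (h : G),
        a (𝒢.r h) * x h = x h * α h (a (𝒢.s h))) ↔
    -- ... iff the coefficients vanish outside the isotropy and implement `α`
    ((∀ h : G, 𝒢.s h ≠ 𝒢.r h → x h = 0) ∧
      ∀ (h : G) (hiso : 𝒢.s h = 𝒢.r h), x h ≠ 0 →
        IsUnit (x h) ∧
          ∀ a : A (𝒢.r h),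
            α h (cast (congrArg A hiso.symm) a) = Ring.inverse (x h) * a * x h) :=
  stmt16_general 𝒢 A hsimple α x
end
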